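/- Let (E^σ_m) ⊆ (F^σ_m) be an elementary injection of families of multifiltrations of a finite-dimensional ℂ-vector space V. Then for every cone σ ∈ Σ and every m ∈ M, either dim_ℂ F^σ_m = dim_ℂ E^σ_m or dim_ℂ F^σ_m = dim_ℂ E^σ_m + 1. -/
import Mathlib


open Finset

namespace Toric

/-- Primitive ray generators of the fan of `ℙⁿ`: `u 0 = -(e₁+⋯+eₙ)` and `u (i+1) = e_{i+1}`. -/
def uGen (n : ℕ) : Fin (n + 1) → Fin n → ℤ :=
  Fin.cons (fun _ => -1) fun k => Pi.single k 1

/-- The duality pairing `⟨m, u_i⟩` for `m ∈ M = ℤⁿ`. -/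
def pair (n : ℕ) (m : Fin n → ℤ) (i : Fin (n + 1)) : ℤ :=
  ∑ j, m j * uGen n i j

/-- A cone of the fan of `ℙⁿ`: a proper subset of the set `{0, …, n}` of rays. -/
abbrev Cone (n : ℕ) : Type := {I : Finset (Fin (n + 1)) // I ≠ Finset.univ}

/-- `m ≤_σ m'`, i.e. `m' - m ∈ σ^∨`. -/
def dualLe (n : ℕ) (σ : Cone n) (m m' : Fin n → ℤ) : Prop :=
  ∀ i ∈ σ.1, 0 ≤ pair n (m' - m) i

/-- `m ∈ σ^⊥`. -/
def inPerp (n : ℕ) (σ : Cone n) (m : Fin n → ℤ) : Prop :=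
  ∀ i ∈ σ.1, pair n m i = 0

/-- `m <_σ m'`, i.e. `m ≤_σ m'` and `m' - m ∉ σ^⊥`. -/
def dualLt (n : ℕ) (σ : Cone n) (m m' : Fin n → ℤ) : Prop :=
  dualLe n σ m m' ∧ ¬ inPerp n σ (m' - m)

/-- A family of multifiltrations of the `ℂ`-vector space `V`, indexed by the cones of the fan
of `ℙⁿ` and the characters `m ∈ M`. -/
structure MultiFilt (n : ℕ) (V : Type) [AddCommGroup V] [Module ℂ V] : Type where
  E : Cone n → (Fin n → ℤ) → Submodule ℂ V
  mono : ∀ σ m m', dualLe n σ m m' → E σ m ≤ E σ m'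
  top_of_empty : ∀ σ : Cone n, σ.1 = ∅ → ∀ m, E σ m = ⊤
  chain_bot : ∀ (σ : Cone n) (ms : ℤ → Fin n → ℤ),
    (∀ i : ℤ, dualLt n σ (ms (i - 1)) (ms i)) →
    ∃ i₀ : ℤ, ∀ i ≤ i₀, E σ (ms i) = ⊥
  finite_support : ∃ S : Finset (Cone n × (Fin n → ℤ)), ∀ (σ : Cone n) (m : Fin n → ℤ),
    ¬ (E σ m : Set V) ⊆ (⋃ m' ∈ {m' | dualLt n σ m' m}, (E σ m' : Set V)) →
    ∃ q ∈ S, q.1 = σ ∧ inPerp n σ (m - q.2)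
  facet_union : ∀ σ τ : Cone n, τ.1 ⊆ σ.1 → τ.1.card + 1 = σ.1.card →
    ∀ mτ : Fin n → ℤ, dualLe n σ 0 mτ → inPerp n τ mτ →
    (∀ w : Fin n → ℤ, inPerp n τ w ↔ ∃ (v : Fin n → ℤ) (k : ℤ), inPerp n σ v ∧ w = v + k • mτ) →
    ∀ m, E τ m = ⨆ i : ℕ, E σ (m + (i : ℤ) • mτ)

/-- A pointwise injection `E ⊆ F` of families of multifiltrations is elementary with
parameters `(k₀, σ₀, m₀)`. -/
structure IsElementary {n : ℕ} {V : Type} [AddCommGroup V] [Module ℂ V]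
    (E F : MultiFilt n V) (k₀ : ℕ) (σ₀ : Cone n) (m₀ : Fin n → ℤ) : Prop where
  le : ∀ σ m, E.E σ m ≤ F.E σ m
  dim : σ₀.1.card = k₀
  eq_of_lt : ∀ σ m, σ.1.card < k₀ → E.E σ m = F.E σ m
  ne_iff : ∀ (σ : Cone n) (m : Fin n → ℤ), σ.1.card = k₀ →
    (E.E σ m ≠ F.E σ m ↔ σ = σ₀ ∧ inPerp n σ₀ (m - m₀))
  rank_step : Module.finrank ℂ (F.E σ₀ m₀) = Module.finrank ℂ (E.E σ₀ m₀) + 1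
  eq_of_gt : ∀ σ m, k₀ < σ.1.card → ¬(σ₀.1 ⊂ σ.1 ∧ dualLe n σ₀ m m₀) → E.E σ m = F.E σ m
  inf_of_gt : ∀ σ m, k₀ < σ.1.card → σ₀.1 ⊂ σ.1 → dualLe n σ₀ m m₀ →
    E.E σ m = F.E σ m ⊓ E.E σ₀ m₀


section Aux

variable {n : ℕ}

lemma pair_zero' (m : Fin n → ℤ) : pair n m 0 = -∑ j, m j := by
  simp [pair, uGen]

lemma pair_succ' (m : Fin n → ℤ) (k : Fin n) : pair n m k.succ = m k := by
  simp only [pair, uGen, Fin.cons_succ]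
  rw [Finset.sum_eq_single k]
  · simp
  · intro b _ hb; simp [Pi.single_eq_of_ne hb]
  · simp

lemma pair_sub' (a b : Fin n → ℤ) (i : Fin (n + 1)) :
    pair n (a - b) i = pair n a i - pair n b i := by
  simp [pair, sub_mul, Finset.sum_sub_distrib]

lemma pair_add' (a b : Fin n → ℤ) (i : Fin (n + 1)) :
    pair n (a + b) i = pair n a i + pair n b i := by
  simp [pair, add_mul, Finset.sum_add_distrib]

lemma pair_smul' (k : ℤ) (a : Fin n → ℤ) (i : Fin (n + 1)) :
    pair n (k • a) i = k * pair n a i := by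
  simp [pair, Finset.mul_sum, mul_assoc]

lemma pair_single_zero (l : Fin n) (c : ℤ) : pair n (Pi.single l c) 0 = -c := by
  rw [pair_zero', Finset.sum_pi_single']
  simp

lemma pair_single_succ (l j : Fin n) (c : ℤ) :
    pair n (Pi.single l c) j.succ = (Pi.single l c : Fin n → ℤ) j := pair_succ' _ _

variable {V : Type} [AddCommGroup V] [Module ℂ V]

lemma facet_step (Mf : MultiFilt n V) (σ τ : Cone n) (hsub : τ.1 ⊆ σ.1)
    (hcard : τ.1.card + 1 = σ.1.card) (mτ : Fin n → ℤ) (h1 : dualLe n σ 0 mτ)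
    (h2 : inPerp n τ mτ)
    (h3 : ∀ w : Fin n → ℤ, inPerp n τ w ↔
      ∃ (v : Fin n → ℤ) (k : ℤ), inPerp n σ v ∧ w = v + k • mτ) (m : Fin n → ℤ) :
    Mf.E σ m ≤ Mf.E τ m := by
  rw [Mf.facet_union σ τ hsub hcard mτ h1 h2 h3 m]
  refine le_iSup_of_le 0 (le_of_eq ?_)
  norm_num

lemma erase_ne_univ (σ : Cone n) (i₀ : Fin (n + 1)) : σ.1.erase i₀ ≠ Finset.univ := by
  intro h
  have h1 := Finset.notMem_erase i₀ σ.1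
  rw [h] at h1
  exact h1 (Finset.mem_univ i₀)

lemma facet_erase_le (Mf : MultiFilt n V) (σ : Cone n) (i₀ : Fin (n + 1))
    (hi₀ : i₀ ∈ σ.1) (m : Fin n → ℤ) :
    Mf.E σ m ≤ Mf.E ⟨σ.1.erase i₀, erase_ne_univ σ i₀⟩ m := by
  obtain ⟨ℓ, hℓ⟩ : ∃ ℓ, ℓ ∉ σ.1 := by
    by_contra hc; push_neg at hc
    exact σ.2 (Finset.eq_univ_iff_forall.mpr hc)
  set τ : Cone n := ⟨σ.1.erase i₀, erase_ne_univ σ i₀⟩ with hτ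
  have hsub : τ.1 ⊆ σ.1 := Finset.erase_subset _ _
  have hcard : τ.1.card + 1 = σ.1.card := Finset.card_erase_add_one hi₀
  have hmemτ : ∀ i, i ∈ τ.1 ↔ i ≠ i₀ ∧ i ∈ σ.1 := by
    intro i; simp [hτ, Finset.mem_erase]
  rcases Fin.eq_zero_or_eq_succ i₀ with h0 | ⟨k, hk⟩
  · -- i₀ = 0; pick ℓ = l.succ ∉ σ, mτ := -(Pi.single l 1)
    have hℓ0 : ℓ ≠ 0 := fun hc => hℓ (by rw [hc, ← h0]; exact hi₀)
    obtain ⟨l, hl⟩ : ∃ l : Fin n, ℓ = l.succ := by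
      rcases Fin.eq_zero_or_eq_succ ℓ with h | h
      · exact absurd h hℓ0
      · exact h
    have hlσ : ∀ j : Fin n, j.succ ∈ σ.1 → j ≠ l := by
      intro j hj hc; exact hℓ (by rw [hl, ← hc]; exact hj)
    refine facet_step Mf σ τ hsub hcard (-(Pi.single l 1)) ?_ ?_ ?_ m
    · intro i hi
      rw [sub_zero]
      rcases Fin.eq_zero_or_eq_succ i with hi0 | ⟨j, hj⟩
      · subst hi0
        rw [pair_zero']
        simp [Finset.sum_pi_single']
      · subst hj
        rw [pair_succ']
        simp [Pi.single_eq_of_ne (hlσ j hi)]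
    · intro i hi
      obtain ⟨hne, hiσ⟩ := (hmemτ i).mp hi
      rcases Fin.eq_zero_or_eq_succ i with hi0 | ⟨j, hj⟩
      · exact absurd (hi0.trans h0.symm) hne
      · subst hj
        rw [pair_succ']
        simp [Pi.single_eq_of_ne (hlσ j hiσ)]
    · intro w
      constructor
      · intro hw
        refine ⟨w - (∑ j, w j) • Pi.single l 1, -(∑ j, w j), ?_, ?_⟩
        · intro i hi
          rcases Fin.eq_zero_or_eq_succ i with hi0 | ⟨j, hj⟩
          · subst hi0
            rw [pair_sub', pair_smul', pair_zero', pair_single_zero]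
            ring
          · subst hj
            rw [pair_sub', pair_smul', pair_single_succ,
              Pi.single_eq_of_ne (hlσ j hi)]
            have hjτ : (Fin.succ j) ∈ τ.1 := (hmemτ _).mpr ⟨by rw [h0]; exact Fin.succ_ne_zero j, hi⟩
            rw [pair_succ']
            have := hw _ hjτ
            rw [pair_succ'] at this
            simpa using this
        · ext x
          simp only [Pi.add_apply, Pi.sub_apply, Pi.smul_apply, Pi.neg_apply,
            smul_eq_mul, mul_neg, neg_neg, neg_mul]
          ring
      · rintro ⟨v, k, hv, rfl⟩
        intro i hi
        obtain ⟨hne, hiσ⟩ := (hmemτ i).mp hi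
        rcases Fin.eq_zero_or_eq_succ i with hi0 | ⟨j, hj⟩
        · exact absurd (hi0.trans h0.symm) hne
        · subst hj
          rw [pair_add', pair_smul', hv _ hiσ]
          rw [pair_succ']
          simp [Pi.single_eq_of_ne (hlσ j hiσ)]
  · -- i₀ = k.succ
    by_cases h0σ : (0 : Fin (n + 1)) ∈ σ.1
    · -- 0 ∈ σ: pick ℓ = l.succ ∉ σ, mτ := Pi.single k 1 - Pi.single l 1
      have hℓ0 : ℓ ≠ 0 := fun hc => hℓ (hc ▸ h0σ)
      obtain ⟨l, hl⟩ : ∃ l : Fin n, ℓ = l.succ := by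
        rcases Fin.eq_zero_or_eq_succ ℓ with h | h
        · exact absurd h hℓ0
        · exact h
      have hlσ : ∀ j : Fin n, j.succ ∈ σ.1 → j ≠ l := by
        intro j hj hc; exact hℓ (by rw [hl, ← hc]; exact hj)
      have hlk : k ≠ l := hlσ k (hk ▸ hi₀)
      refine facet_step Mf σ τ hsub hcard (Pi.single k 1 - Pi.single l 1) ?_ ?_ ?_ m
      · intro i hi
        rw [sub_zero, pair_sub']
        rcases Fin.eq_zero_or_eq_succ i with hi0 | ⟨j, hj⟩
        · subst hi0; rw [pair_single_zero, pair_single_zero]; norm_num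
        · subst hj
          rw [pair_single_succ, pair_single_succ, Pi.single_eq_of_ne (hlσ j hi)]
          rcases eq_or_ne j k with rfl | hjk
          · simp
          · simp [Pi.single_eq_of_ne hjk]
      · intro i hi
        obtain ⟨hne, hiσ⟩ := (hmemτ i).mp hi
        rw [pair_sub']
        rcases Fin.eq_zero_or_eq_succ i with hi0 | ⟨j, hj⟩
        · subst hi0; rw [pair_single_zero, pair_single_zero]; ring
        · subst hj
          have hjk : j ≠ k := fun hc => hne (by rw [hc, hk])
          rw [pair_single_succ, pair_single_succ, Pi.single_eq_of_ne (hlσ j hiσ),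
            Pi.single_eq_of_ne hjk]
          ring
      · intro w
        constructor
        · intro hw
          refine ⟨w - (w k) • (Pi.single k 1 - Pi.single l 1), w k, ?_, by ring⟩
          intro i hi
          rw [pair_sub', pair_smul', pair_sub']
          rcases Fin.eq_zero_or_eq_succ i with hi0 | ⟨j, hj⟩
          · subst hi0
            have h0τ : (0 : Fin (n + 1)) ∈ τ.1 :=
              (hmemτ _).mpr ⟨by rw [hk]; exact (Fin.succ_ne_zero k).symm, h0σ⟩
            rw [pair_single_zero, pair_single_zero]
            have := hw _ h0τ
            linarith [this]
          · subst hj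
            rw [pair_single_succ, pair_single_succ, pair_succ',
              Pi.single_eq_of_ne (hlσ j hi)]
            rcases eq_or_ne j k with rfl | hjk
            · simp
            · have hjτ : (Fin.succ j) ∈ τ.1 :=
                (hmemτ _).mpr ⟨by rw [hk]; exact fun hc => hjk (Fin.succ_injective _ hc), hi⟩
              have := hw _ hjτ
              rw [pair_succ'] at this
              rw [Pi.single_eq_of_ne hjk, this]
              ring
        · rintro ⟨v, c, hv, rfl⟩
          intro i hi
          obtain ⟨hne, hiσ⟩ := (hmemτ i).mp hi
          rw [pair_add', pair_smul', hv _ hiσ, pair_sub']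
          rcases Fin.eq_zero_or_eq_succ i with hi0 | ⟨j, hj⟩
          · subst hi0; rw [pair_single_zero, pair_single_zero]; ring
          · subst hj
            have hjk : j ≠ k := fun hc => hne (by rw [hc, hk])
            rw [pair_single_succ, pair_single_succ, Pi.single_eq_of_ne (hlσ j hiσ),
              Pi.single_eq_of_ne hjk]
            ring
    · -- 0 ∉ σ: mτ := Pi.single k 1
      refine facet_step Mf σ τ hsub hcard (Pi.single k 1) ?_ ?_ ?_ m
      · intro i hi
        rw [sub_zero]
        rcases Fin.eq_zero_or_eq_succ i with hi0 | ⟨j, hj⟩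
        · exact absurd (hi0 ▸ hi) h0σ
        · subst hj
          rw [pair_single_succ]
          rcases eq_or_ne j k with rfl | hjk
          · simp
          · simp [Pi.single_eq_of_ne hjk]
      · intro i hi
        obtain ⟨hne, hiσ⟩ := (hmemτ i).mp hi
        rcases Fin.eq_zero_or_eq_succ i with hi0 | ⟨j, hj⟩
        · exact absurd (hi0 ▸ hiσ) h0σ
        · subst hj
          have hjk : j ≠ k := fun hc => hne (by rw [hc, hk])
          rw [pair_single_succ, Pi.single_eq_of_ne hjk]
      · intro w
        constructor
        · intro hw
          refine ⟨w - (w k) • Pi.single k 1, w k, ?_, by ring⟩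
          intro i hi
          rcases Fin.eq_zero_or_eq_succ i with hi0 | ⟨j, hj⟩
          · exact absurd (hi0 ▸ hi) h0σ
          · subst hj
            rw [pair_sub', pair_smul', pair_single_succ, pair_succ']
            rcases eq_or_ne j k with rfl | hjk
            · simp
            · have hjτ : (Fin.succ j) ∈ τ.1 :=
                (hmemτ _).mpr ⟨by rw [hk]; exact fun hc => hjk (Fin.succ_injective _ hc), hi⟩
              have := hw _ hjτ
              rw [pair_succ'] at this
              rw [Pi.single_eq_of_ne hjk, this]
              ring
        · rintro ⟨v, c, hv, rfl⟩
          intro i hi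
          obtain ⟨hne, hiσ⟩ := (hmemτ i).mp hi
          rcases Fin.eq_zero_or_eq_succ i with hi0 | ⟨j, hj⟩
          · exact absurd (hi0 ▸ hiσ) h0σ
          · subst hj
            have hjk : j ≠ k := fun hc => hne (by rw [hc, hk])
            rw [pair_add', pair_smul', hv _ hiσ, pair_single_succ,
              Pi.single_eq_of_ne hjk]
            ring

lemma face_le_aux (Mf : MultiFilt n V) :
    ∀ (d : ℕ) (σ τ : Cone n), σ.1.card ≤ d → τ.1 ⊆ σ.1 → ∀ m, Mf.E σ m ≤ Mf.E τ m := by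
  intro d
  induction d with
  | zero =>
    intro σ τ hd hsub m
    have hσ : σ.1 = ∅ := Finset.card_eq_zero.mp (Nat.le_zero.mp hd)
    have hτ : τ.1 = ∅ := Finset.subset_empty.mp (hσ ▸ hsub)
    rw [Mf.top_of_empty τ hτ]
    exact le_top
  | succ d ih =>
    intro σ τ hd hsub m
    by_cases heq : τ.1 = σ.1
    · have : τ = σ := Subtype.ext heq
      rw [this]
    · obtain ⟨i₀, hi₀σ, hi₀τ⟩ : ∃ i₀ ∈ σ.1, i₀ ∉ τ.1 := by
        by_contra hc; push_neg at hc
        exact heq (Finset.Subset.antisymm hsub hc)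
      refine le_trans (facet_erase_le Mf σ i₀ hi₀σ m) (ih ⟨σ.1.erase i₀, erase_ne_univ σ i₀⟩ τ ?_ ?_ m)
      · show (σ.1.erase i₀).card ≤ d
        have := Finset.card_erase_add_one hi₀σ
        omega
      · exact Finset.subset_erase.mpr ⟨hsub, hi₀τ⟩

lemma face_le (Mf : MultiFilt n V) (σ τ : Cone n) (hsub : τ.1 ⊆ σ.1) (m : Fin n → ℤ) :
    Mf.E σ m ≤ Mf.E τ m :=
  face_le_aux Mf σ.1.card σ τ le_rfl hsub m

end Aux

/-- Lemma: dimension dichotomy for elementary injections. -/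
theorem stmt1 (n : ℕ) (V : Type) [AddCommGroup V] [Module ℂ V] [FiniteDimensional ℂ V]
    (E F : MultiFilt n V) (k₀ : ℕ) (σ₀ : Cone n) (m₀ : Fin n → ℤ)
    (h : IsElementary E F k₀ σ₀ m₀) (σ : Cone n) (m : Fin n → ℤ) :
    Module.finrank ℂ (F.E σ m) = Module.finrank ℂ (E.E σ m) ∨
    Module.finrank ℂ (F.E σ m) = Module.finrank ℂ (E.E σ m) + 1 := by
  rcases lt_trichotomy σ.1.card k₀ with hlt | heq | hgt
  · left; rw [h.eq_of_lt σ m hlt]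
  · by_cases hne : E.E σ m = F.E σ m
    · left; rw [hne]
    · right
      obtain ⟨hσ, hperp⟩ := (h.ne_iff σ m heq).mp hne
      subst hσ
      have hle1 : dualLe n σ m₀ m := by
        intro i hi; rw [hperp i hi]
      have hle2 : dualLe n σ m m₀ := by
        intro i hi
        have hp := hperp i hi
        rw [pair_sub'] at hp ⊢
        linarith
      have hE : E.E σ m = E.E σ m₀ :=
        le_antisymm (E.mono σ m m₀ hle2) (E.mono σ m₀ m hle1)
      have hF : F.E σ m = F.E σ m₀ :=
        le_antisymm (F.mono σ m m₀ hle2) (F.mono σ m₀ m hle1)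
      rw [hE, hF, h.rank_step]
  · by_cases hcond : σ₀.1 ⊂ σ.1 ∧ dualLe n σ₀ m m₀
    · obtain ⟨hss, hdle⟩ := hcond
      have hinf : E.E σ m = F.E σ m ⊓ E.E σ₀ m₀ := h.inf_of_gt σ m hgt hss hdle
      have hface : F.E σ m ≤ F.E σ₀ m := face_le F σ σ₀ hss.subset m
      have h1 : F.E σ m ≤ F.E σ₀ m₀ := hface.trans (F.mono σ₀ m m₀ hdle)
      have h2 : F.E σ m ⊔ E.E σ₀ m₀ ≤ F.E σ₀ m₀ := sup_le h1 (h.le σ₀ m₀)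
      have key := Submodule.finrank_sup_add_finrank_inf_eq (F.E σ m) (E.E σ₀ m₀)
      have h3 : Module.finrank ℂ ↥(F.E σ m ⊔ E.E σ₀ m₀) ≤ Module.finrank ℂ (F.E σ₀ m₀) :=
        Submodule.finrank_mono h2
      have h4 : Module.finrank ℂ (F.E σ m) ≤
          Module.finrank ℂ ↥(F.E σ m ⊔ E.E σ₀ m₀) :=
        Submodule.finrank_mono le_sup_left
      have h5 : Module.finrank ℂ ↥(F.E σ m ⊓ E.E σ₀ m₀) ≤ Module.finrank ℂ (F.E σ m) :=
        Submodule.finrank_mono inf_le_left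
      rw [hinf]
      rw [h.rank_step] at h3
      omega
    · left; rw [h.eq_of_gt σ m hgt hcond]

end Toric
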